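/- Let Σ₀ ∈ ℝ^{p×p} be symmetric positive semidefinite with largest eigenvalue Λ₁ = Λ_max(Σ₀) strictly larger than its second largest eigenvalue Λ₂, and unit top eigenvector u₁ with at most s nonzero entries; set β⁰ := Λ₁^{1/2} u₁. Let Σ̃ be symmetric with μ ≥ 2‖Σ̃ − Σ₀‖_∞, let F̂ be the Fantope SDP estimator with tuning parameter μ, with eigendecomposition F̂ = Σ_{j=1}^p φ̂_j² û_j û_jᵀ (φ̂₁² ≥ ... ≥ φ̂_p² ≥ 0, û_j orthonormal, û₁ᵀu₁ ≥ 0), and let ε > 0 be such that ‖û₁ − u₁‖₂² ≤ ε², Σ_{j=2}^p φ̂_j² ≤ ε, and ‖F̂‖₁ ≤ s + ε²/μ. Define the rescaled initial estimator β̂_init := |trace(Σ̃ F̂)|^{1/2} û₁ and α := s μ + ε² + 6‖β⁰‖₂² ε + 4‖β⁰‖₂ √ε. If Λ_max(Σ₀) > α, then ‖β̂_init − β⁰‖₂ ≤ α / (2√(Λ_max(Σ₀) − α)) + 2√ε · Λ_max(Σ₀)^{1/2}. -/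

import Mathlib

open Matrix Finset

noncomputable section

/-- Euclidean norm on `Fin p → ℝ`. -/
def l2 {p : ℕ} (v : Fin p → ℝ) : ℝ := Real.sqrt (∑ j, v j ^ 2)

/-- Inner product on `Fin p → ℝ`. -/
def dotp {p : ℕ} (v w : Fin p → ℝ) : ℝ := ∑ j, v j * w j

/-- Entrywise sup norm `‖A‖_∞ = max_{j,k} |A_{jk}|`. -/
def msup {p : ℕ} (A : Matrix (Fin p) (Fin p) ℝ) : ℝ := ⨆ j, ⨆ k, |A j k|

/-- Entrywise ℓ¹ norm `‖A‖₁ = ∑_{j,k} |A_{jk}|`. -/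
def m1 {p : ℕ} (A : Matrix (Fin p) (Fin p) ℝ) : ℝ := ∑ j, ∑ k, |A j k|

/-- The Fantope `{F : F symmetric, 0 ⪯ F ⪯ I, trace F = 1}`. -/
def Fantope (p : ℕ) : Set (Matrix (Fin p) (Fin p) ℝ) :=
  {F | F.IsSymm ∧ F.PosSemidef ∧ (1 - F).PosSemidef ∧ F.trace = 1}

/-- `F` is a Fantope SDP estimator with input `S` and tuning parameter `μ`:
a minimizer of `F ↦ -trace(S F) + μ ‖F‖₁` over the Fantope. -/
def IsFantopeSol {p : ℕ} (S : Matrix (Fin p) (Fin p) ℝ) (μ : ℝ)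
    (F : Matrix (Fin p) (Fin p) ℝ) : Prop :=
  F ∈ Fantope p ∧
    ∀ G ∈ Fantope p, -(S * F).trace + μ * m1 F ≤ -(S * G).trace + μ * m1 G


/-!
Split `trace(Σ̃ F̂) = trace(Σ₀ F̂) + trace((Σ̃ - Σ₀) F̂)`. Writing `F̂ = ∑ d_j v_j v_jᵀ`, the first
term is a convex combination of Rayleigh quotients of `Σ₀`, all at most `Λ₁`, with weight at
least `1 - ε` on `û₁`, whose Rayleigh quotient is at least `Λ₁ (1 - ‖û₁ - u₁‖²)`; so it is within
`2 Λ₁ ε` of `Λ₁`. The second is at most `‖Σ̃ - Σ₀‖_∞ ‖F̂‖₁ ≤ (sμ + ε²)/2`. Hence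
`|trace(Σ̃ F̂) - Λ₁| ≤ α`; both numbers are at least `Λ₁ - α`, so their square roots differ by
at most `α / (2 √(Λ₁ - α))`, and the direction error contributes `√Λ₁ ‖û₁ - u₁‖ ≤ √Λ₁ ε`.
-/

lemma abs_sqrt_sub_sqrt_le {x y c : ℝ} (hc : 0 < c) (hx : c ≤ x) (hy : c ≤ y) :
    |√x - √y| ≤ |x - y| / (2 * √c) := by
  have hsx : √c ≤ √x := Real.sqrt_le_sqrt hx
  have hsy : √c ≤ √y := Real.sqrt_le_sqrt hy
  have hpos : 0 < √c := Real.sqrt_pos.mpr hc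
  rw [le_div_iff₀ (by positivity)]
  calc |√x - √y| * (2 * √c) ≤ |√x - √y| * (√x + √y) := by gcongr; linarith
    _ = |x - y| := by
      rw [← abs_of_pos (by linarith : 0 < √x + √y), ← abs_mul, mul_comm, ← sq_sub_sq,
        Real.sq_sqrt (by linarith), Real.sq_sqrt (by linarith)]

section

variable {p : ℕ}

lemma l2_eq_norm (v : Fin p → ℝ) : l2 v = ‖WithLp.toLp 2 v‖ := by
  simp [l2, EuclideanSpace.norm_eq]

lemma dotp_eq_inner (v w : Fin p → ℝ) :
    dotp v w = inner ℝ (WithLp.toLp 2 v) (WithLp.toLp 2 w) := by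
  simp [dotp, EuclideanSpace.inner_toLp_toLp, dotProduct, mul_comm]

lemma dotp_eq_dotProduct (v w : Fin p → ℝ) : dotp v w = v ⬝ᵥ w := rfl

lemma l2_sq (v : Fin p → ℝ) : l2 v ^ 2 = dotp v v := by
  rw [l2_eq_norm, dotp_eq_inner, real_inner_self_eq_norm_sq]

lemma l2_nonneg (v : Fin p → ℝ) : 0 ≤ l2 v := Real.sqrt_nonneg _

lemma l2_eq_one_iff (v : Fin p → ℝ) : l2 v = 1 ↔ dotp v v = 1 := by
  rw [← l2_sq, pow_eq_one_iff_of_nonneg (l2_nonneg v) two_ne_zero]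

lemma l2_sub_sq_of_unit {u w : Fin p → ℝ} (hu : l2 u = 1) (hw : l2 w = 1) :
    l2 (w - u) ^ 2 = 2 - 2 * dotp w u := by
  rw [l2_eq_norm, WithLp.toLp_sub, norm_sub_sq_real, ← l2_eq_norm, ← l2_eq_norm, hu, hw,
    dotp_eq_inner]
  ring

lemma l2_smul (c : ℝ) (v : Fin p → ℝ) : l2 (c • v) = |c| * l2 v := by
  rw [l2_eq_norm, l2_eq_norm, WithLp.toLp_smul, norm_smul, Real.norm_eq_abs]

lemma l2_smul_sub_smul_le {u w : Fin p → ℝ} (hw : l2 w = 1) {a b : ℝ} (hb : 0 ≤ b) :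
    l2 (a • w - b • u) ≤ |a - b| + b * l2 (w - u) := by
  have hsplit : a • w - b • u = (a - b) • w + b • (w - u) := by module
  simp only [hsplit, l2_eq_norm, WithLp.toLp_add, WithLp.toLp_smul] at hw ⊢
  calc _ ≤ ‖(a - b) • WithLp.toLp 2 w‖ + ‖b • WithLp.toLp 2 (w - u)‖ := norm_add_le _ _
    _ = _ := by rw [norm_smul, norm_smul, hw, Real.norm_eq_abs, Real.norm_of_nonneg hb, mul_one]

lemma l2_sqrt_abs_smul_sub_sqrt_smul_le {u w : Fin p → ℝ} (hw : l2 w = 1) {T Λ α ε : ℝ}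
    (hT : |T - Λ| ≤ α) (hαΛ : α < Λ) (hclose : l2 (w - u) ≤ ε) (hε1 : ε ≤ 1) :
    l2 (√|T| • w - √Λ • u) ≤ α / (2 * √(Λ - α)) + 2 * √ε * √Λ := by
  have hα0 : 0 ≤ α := (abs_nonneg _).trans hT
  have hTlow : Λ - α ≤ T := by linarith [(abs_le.mp hT).1]
  have hε : 0 ≤ ε := (l2_nonneg _).trans hclose
  have hε2 : ε ≤ 2 * √ε := by nlinarith [Real.sq_sqrt hε, Real.sqrt_nonneg ε]
  calc l2 (√|T| • w - √Λ • u) ≤ |√|T| - √Λ| + √Λ * l2 (w - u) :=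
        l2_smul_sub_smul_le hw (Real.sqrt_nonneg _)
    _ ≤ α / (2 * √(Λ - α)) + √Λ * (2 * √ε) := by
        gcongr
        · rw [abs_of_pos (a := T) (by linarith)]
          calc |√T - √Λ| ≤ |T - Λ| / (2 * √(Λ - α)) :=
                abs_sqrt_sub_sqrt_le (sub_pos.2 hαΛ) hTlow (by linarith)
            _ ≤ α / (2 * √(Λ - α)) := by gcongr
        · exact hclose.trans hε2
    _ = α / (2 * √(Λ - α)) + 2 * √ε * √Λ := by ring

lemma le_dotp_mulVec_of_eigenvector {S : Matrix (Fin p) (Fin p) ℝ} (hS : S.IsSymm)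
    (hpsd : S.PosSemidef) {u w : Fin p → ℝ} {Λ : ℝ} (heig : S *ᵥ u = Λ • u) (hu : l2 u = 1)
    (hw : l2 w = 1) : Λ * (1 - l2 (w - u) ^ 2) ≤ dotp w (S *ᵥ w) := by
  obtain ⟨δ, rfl⟩ : ∃ δ, w = u + δ := ⟨w - u, by abel⟩
  -- Since `u` and `u + δ` are unit vectors, the cross term `2Λ⟪δ, u⟫` is exactly `-Λ‖δ‖²`.
  have huu : u ⬝ᵥ u = 1 := by rw [← dotp_eq_dotProduct, ← l2_sq, hu, one_pow]
  have hcross : u ⬝ᵥ (S *ᵥ δ) = Λ * (δ ⬝ᵥ u) := by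
    rw [dotProduct_mulVec, ← hS.eq, vecMul_transpose, heig, smul_dotProduct, dotProduct_comm,
      smul_eq_mul]
  have hdist : l2 (u + δ - u) ^ 2 = -2 * (δ ⬝ᵥ u) := by
    rw [l2_sub_sq_of_unit hu hw, dotp_eq_dotProduct, add_dotProduct, huu]
    ring
  have hδ := hpsd.dotProduct_mulVec_nonneg δ
  simp only [star_trivial] at hδ
  rw [hdist, dotp_eq_dotProduct, mulVec_add, heig, dotProduct_add, add_dotProduct,
    add_dotProduct, hcross, dotProduct_smul, dotProduct_smul, huu, smul_eq_mul, smul_eq_mul]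
  linarith

lemma trace_mul_sum_smul_vecMulVec (S : Matrix (Fin p) (Fin p) ℝ) (d : Fin p → ℝ)
    (v : Fin p → Fin p → ℝ) :
    (S * ∑ j, d j • vecMulVec (v j) (v j)).trace = ∑ j, d j * dotp (v j) (S *ᵥ v j) := by
  simp only [Matrix.mul_sum, Matrix.mul_smul, trace_sum, trace_smul, mul_vecMulVec,
    trace_vecMulVec, smul_eq_mul, dotp, dotProduct, mul_comm]

lemma trace_sum_smul_vecMulVec (d : Fin p → ℝ) {v : Fin p → Fin p → ℝ}
    (hv : ∀ j, l2 (v j) = 1) : (∑ j, d j • vecMulVec (v j) (v j)).trace = ∑ j, d j := by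
  simp only [trace_sum, trace_smul, trace_vecMulVec, ← dotp_eq_dotProduct, ← l2_sq, hv,
    one_pow, smul_eq_mul, mul_one]

lemma mul_dotp_mulVec_le_trace_mul_sum {S : Matrix (Fin p) (Fin p) ℝ} (hS : S.PosSemidef)
    {d : Fin p → ℝ} (hd : ∀ j, 0 ≤ d j) (v : Fin p → Fin p → ℝ) (i : Fin p) :
    d i * dotp (v i) (S *ᵥ v i) ≤ (S * ∑ j, d j • vecMulVec (v j) (v j)).trace := by
  rw [trace_mul_sum_smul_vecMulVec]
  refine single_le_sum (f := fun j => d j * dotp (v j) (S *ᵥ v j))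
    (fun j _ => mul_nonneg (hd j) ?_) (mem_univ i)
  simpa [dotp_eq_dotProduct] using hS.dotProduct_mulVec_nonneg (v j)

lemma trace_mul_sum_le {S : Matrix (Fin p) (Fin p) ℝ} {Λ : ℝ}
    (hS : ∀ w, dotp w (S *ᵥ w) ≤ Λ * dotp w w) {d : Fin p → ℝ} (hd : ∀ j, 0 ≤ d j)
    (v : Fin p → Fin p → ℝ) :
    (S * ∑ j, d j • vecMulVec (v j) (v j)).trace ≤
      Λ * (∑ j, d j • vecMulVec (v j) (v j)).trace := by
  have htrace := trace_mul_sum_smul_vecMulVec 1 d v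
  rw [Matrix.one_mul] at htrace
  rw [trace_mul_sum_smul_vecMulVec, htrace, mul_sum]
  refine sum_le_sum fun j _ => ?_
  rw [one_mulVec, mul_left_comm]
  exact mul_le_mul_of_nonneg_left (hS (v j)) (hd j)

lemma abs_trace_mul_sub_le_of_eigenvector {S : Matrix (Fin p) (Fin p) ℝ} (hS : S.IsSymm)
    (hpsd : S.PosSemidef) {u : Fin p → ℝ} {Λ : ℝ} (heig : S *ᵥ u = Λ • u) (hu : l2 u = 1)
    (htop : ∀ w, dotp w (S *ᵥ w) ≤ Λ * dotp w w) {d : Fin p → ℝ} {v : Fin p → Fin p → ℝ}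
    {i : Fin p} {ε : ℝ} (hv : ∀ j, l2 (v j) = 1) (hd : ∀ j, 0 ≤ d j)
    (hF : (∑ j, d j • vecMulVec (v j) (v j)).trace = 1) (htail : ∑ j ∈ univ.erase i, d j ≤ ε)
    (hclose : l2 (v i - u) ≤ ε) (hε1 : ε ≤ 1) :
    |(S * ∑ j, d j • vecMulVec (v j) (v j)).trace - Λ| ≤ 2 * Λ * ε := by
  have hΛ : 0 ≤ Λ := by
    have := hpsd.dotProduct_mulVec_nonneg u
    rwa [star_trivial, heig, dotProduct_smul, ← dotp_eq_dotProduct, ← l2_sq, hu, one_pow,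
      smul_eq_mul, mul_one] at this
  have hdi : 1 - ε ≤ d i := by
    rw [trace_sum_smul_vecMulVec d hv, ← add_sum_erase _ _ (mem_univ i)] at hF
    linarith
  have hε : 0 ≤ ε := (l2_nonneg _).trans hclose
  have hsq : l2 (v i - u) ^ 2 ≤ ε ^ 2 := pow_le_pow_left₀ (l2_nonneg _) hclose 2
  have hup := trace_mul_sum_le htop hd v
  rw [hF, mul_one] at hup
  have hlow : Λ - 2 * Λ * ε ≤ (S * ∑ j, d j • vecMulVec (v j) (v j)).trace :=
    calc Λ - 2 * Λ * ε ≤ (1 - ε) * (Λ * (1 - ε ^ 2)) := by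
          nlinarith [mul_nonneg (mul_nonneg hΛ hε) (sq_nonneg (1 - ε))]
      _ ≤ (1 - ε) * (Λ * (1 - l2 (v i - u) ^ 2)) := by gcongr
      _ ≤ d i * dotp (v i) (S *ᵥ v i) :=
          mul_le_mul hdi (le_dotp_mulVec_of_eigenvector hS hpsd heig hu (hv i))
            (mul_nonneg hΛ (by nlinarith)) (hd i)
      _ ≤ _ := mul_dotp_mulVec_le_trace_mul_sum hpsd hd v i
  rw [abs_le]
  constructor <;> linarith [mul_nonneg hΛ hε]

lemma msup_nonneg (A : Matrix (Fin p) (Fin p) ℝ) : 0 ≤ msup A :=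
  Real.iSup_nonneg fun _ => Real.iSup_nonneg fun _ => abs_nonneg _

lemma m1_nonneg (A : Matrix (Fin p) (Fin p) ℝ) : 0 ≤ m1 A :=
  sum_nonneg fun _ _ => sum_nonneg fun _ _ => abs_nonneg _

lemma le_msup (A : Matrix (Fin p) (Fin p) ℝ) (i k : Fin p) : |A i k| ≤ msup A :=
  (le_ciSup (Set.finite_range _).bddAbove k).trans
    (le_ciSup (f := fun i => ⨆ k, |A i k|) (Set.finite_range _).bddAbove i)

lemma abs_trace_mul_le (A B : Matrix (Fin p) (Fin p) ℝ) : |(A * B).trace| ≤ msup A * m1 B := by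
  calc |(A * B).trace| = |∑ i, ∑ k, A i k * B k i| := by simp [Matrix.trace, Matrix.mul_apply]
    _ ≤ ∑ i, ∑ k, |A i k| * |B k i| := by
        refine (Finset.abs_sum_le_sum_abs _ _).trans (sum_le_sum fun i _ => ?_)
        simpa only [abs_mul] using Finset.abs_sum_le_sum_abs (fun k => A i k * B k i) univ
    _ ≤ ∑ i, ∑ k, msup A * |B k i| := by gcongr; exact le_msup A _ _
    _ = msup A * m1 B := by rw [m1, sum_comm]; simp only [mul_sum]

lemma abs_trace_mul_le_of_m1_le {A B : Matrix (Fin p) (Fin p) ℝ} {μ s e : ℝ}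
    (hA : 2 * msup A ≤ μ) (hB : m1 B ≤ s + e / μ) (he : 0 ≤ e) :
    |(A * B).trace| ≤ (s * μ + e) / 2 := by
  have hμB : μ * m1 B ≤ s * μ + e := by
    rcases (mul_nonneg zero_le_two (msup_nonneg A)).trans hA |>.eq_or_lt with rfl | hμ
    · simpa using he
    · calc μ * m1 B ≤ μ * (s + e / μ) := by gcongr
        _ = s * μ + e := by field_simp
  calc |(A * B).trace| ≤ msup A * m1 B := abs_trace_mul_le A B
    _ ≤ μ / 2 * m1 B := by gcongr; exacts [m1_nonneg B, by linarith]
    _ ≤ (s * μ + e) / 2 := by linarith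

end

theorem initial_estimator_bound_general
    (p s : ℕ) (S₀ St Fh : Matrix (Fin p) (Fin p) ℝ)
    (u₁ uh : Fin p → ℝ) (Λ₁ μ ε : ℝ)
    (hsymm₀ : S₀.IsSymm) (hpsd : S₀.PosSemidef)
    -- `u₁` is a unit eigenvector of `S₀` for the largest eigenvalue `Λ₁ = Λ_max(S₀)`
    (heig : S₀.mulVec u₁ = Λ₁ • u₁) (hu₁ : l2 u₁ = 1)
    (htop : ∀ w : Fin p → ℝ, dotp w (S₀.mulVec w) ≤ Λ₁ * dotp w w)
    (hμ : 2 * msup (St - S₀) ≤ μ)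
    (hFh : IsFantopeSol St μ Fh)
    -- eigendecomposition `F̂ = ∑_j φ̂_j² û_j û_jᵀ` with orthonormal `û_j`,
    -- nonnegative eigenvalues, top eigenvector `û₁ = uh`
    (hdecomp : ∃ (d : Fin p → ℝ) (v : Fin p → Fin p → ℝ) (i₀ : Fin p),
      (∀ j k, dotp (v j) (v k) = if j = k then (1 : ℝ) else 0) ∧
      (∀ j, 0 ≤ d j) ∧ (∀ j, d j ≤ d i₀) ∧ v i₀ = uh ∧
      Fh = ∑ j, d j • vecMulVec (v j) (v j) ∧
      -- `∑_{j=2}^p φ̂_j² ≤ ε`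
      ∑ j ∈ univ.erase i₀, d j ≤ ε)
    (hε : 0 < ε)
    (hclose : l2 (uh - u₁) ^ 2 ≤ ε ^ 2)
    (hl1Fh : m1 Fh ≤ (s : ℝ) + ε ^ 2 / μ) :
    -- with `β⁰ := Λ₁^{1/2} u₁`, `β̂_init := |trace(Σ̃ F̂)|^{1/2} û₁` and
    -- `α := sμ + ε² + 6‖β⁰‖₂²ε + 4‖β⁰‖₂√ε`, if `Λ_max(S₀) > α` then the bound holds
    ∀ β0 βinit : Fin p → ℝ, β0 = Real.sqrt Λ₁ • u₁ →
      βinit = Real.sqrt |(St * Fh).trace| • uh →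
      ∀ α : ℝ, α = (s : ℝ) * μ + ε ^ 2 + 6 * l2 β0 ^ 2 * ε + 4 * l2 β0 * Real.sqrt ε →
      α < Λ₁ →
      l2 (βinit - β0) ≤ α / (2 * Real.sqrt (Λ₁ - α)) + 2 * Real.sqrt ε * Real.sqrt Λ₁ := by
  intro β0 βinit rfl rfl α hα hαΛ
  obtain ⟨d, v, i₀, horth, hd, -, rfl, rfl, htail⟩ := hdecomp
  have hv : ∀ j, l2 (v j) = 1 := fun j => (l2_eq_one_iff _).2 (by simpa using horth j j)
  have hμ0 : 0 ≤ μ := (mul_nonneg zero_le_two (msup_nonneg _)).trans hμ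
  rw [l2_smul, hu₁, mul_one, abs_of_nonneg (Real.sqrt_nonneg _)] at hα
  have hΛ : 0 < Λ₁ := lt_of_le_of_lt (by rw [hα]; positivity) hαΛ
  rw [Real.sq_sqrt hΛ.le] at hα
  have hε1 : ε ≤ 1 := by nlinarith [Real.sqrt_nonneg Λ₁, Real.sqrt_nonneg ε]
  have hdist : l2 (v i₀ - u₁) ≤ ε :=
    (pow_le_pow_iff_left₀ (l2_nonneg _) hε.le two_ne_zero).mp hclose
  have hsignal := abs_trace_mul_sub_le_of_eigenvector hsymm₀ hpsd heig hu₁ htop hv hd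
    hFh.1.2.2.2 htail hdist hε1
  have hnoise := abs_trace_mul_le_of_m1_le hμ hl1Fh (sq_nonneg ε)
  refine l2_sqrt_abs_smul_sub_sqrt_smul_le (hv i₀) ?_ hαΛ hdist hε1
  rw [← add_sub_cancel S₀ St, Matrix.add_mul, trace_add, add_sub_right_comm, hα]
  refine (abs_add_le _ _).trans ?_
  linarith [mul_nonneg hΛ.le hε.le, mul_nonneg (Nat.cast_nonneg s : (0 : ℝ) ≤ s) hμ0,
    mul_nonneg (Real.sqrt_nonneg Λ₁) (Real.sqrt_nonneg ε), sq_nonneg ε]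

/-- Bound on the rescaled initial estimator
`β̂_init = |trace(Σ̃ F̂)|^{1/2} û₁` built from the Fantope SDP solution. -/
theorem initial_estimator_bound
    (p s : ℕ) (S₀ St Fh : Matrix (Fin p) (Fin p) ℝ)
    (u₁ uh : Fin p → ℝ) (Λ₁ Λ₂ μ ε : ℝ)
    (hsymm₀ : S₀.IsSymm) (hpsd : S₀.PosSemidef)
    -- `u₁` is a unit eigenvector of `S₀` for the largest eigenvalue `Λ₁ = Λ_max(S₀)`
    (heig : S₀.mulVec u₁ = Λ₁ • u₁) (hu₁ : l2 u₁ = 1)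
    (htop : ∀ w : Fin p → ℝ, dotp w (S₀.mulVec w) ≤ Λ₁ * dotp w w)
    -- all other eigenvalues are at most `Λ₂ < Λ₁`
    (hsecond : ∀ w : Fin p → ℝ, dotp w u₁ = 0 → dotp w (S₀.mulVec w) ≤ Λ₂ * dotp w w)
    (hgap : Λ₂ < Λ₁)
    -- `u₁` has at most `s` nonzero entries
    (hsparse : ((univ : Finset (Fin p)).filter (fun j => u₁ j ≠ 0)).card ≤ s)
    (hsymmt : St.IsSymm) (hμ : 2 * msup (St - S₀) ≤ μ)
    (hFh : IsFantopeSol St μ Fh)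
    -- eigendecomposition `F̂ = ∑_j φ̂_j² û_j û_jᵀ` with orthonormal `û_j`,
    -- nonnegative eigenvalues, top eigenvector `û₁ = uh`
    (hdecomp : ∃ (d : Fin p → ℝ) (v : Fin p → Fin p → ℝ) (i₀ : Fin p),
      (∀ j k, dotp (v j) (v k) = if j = k then (1 : ℝ) else 0) ∧
      (∀ j, 0 ≤ d j) ∧ (∀ j, d j ≤ d i₀) ∧ v i₀ = uh ∧
      Fh = ∑ j, d j • vecMulVec (v j) (v j) ∧
      -- `∑_{j=2}^p φ̂_j² ≤ ε`
      ∑ j ∈ univ.erase i₀, d j ≤ ε)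
    (hsign : 0 ≤ dotp uh u₁)
    (hε : 0 < ε)
    (hclose : l2 (uh - u₁) ^ 2 ≤ ε ^ 2)
    (hl1Fh : m1 Fh ≤ (s : ℝ) + ε ^ 2 / μ) :
    -- with `β⁰ := Λ₁^{1/2} u₁`, `β̂_init := |trace(Σ̃ F̂)|^{1/2} û₁` and
    -- `α := sμ + ε² + 6‖β⁰‖₂²ε + 4‖β⁰‖₂√ε`, if `Λ_max(S₀) > α` then the bound holds
    ∀ β0 βinit : Fin p → ℝ, β0 = Real.sqrt Λ₁ • u₁ →
      βinit = Real.sqrt |(St * Fh).trace| • uh →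
      ∀ α : ℝ, α = (s : ℝ) * μ + ε ^ 2 + 6 * l2 β0 ^ 2 * ε + 4 * l2 β0 * Real.sqrt ε →
      α < Λ₁ →
      l2 (βinit - β0) ≤ α / (2 * Real.sqrt (Λ₁ - α)) + 2 * Real.sqrt ε * Real.sqrt Λ₁ :=
  initial_estimator_bound_general p s S₀ St Fh u₁ uh Λ₁ μ ε hsymm₀ hpsd heig hu₁ htop hμ hFh hdecomp
    hε hclose hl1Fh
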